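/- arXiv:2004.00187 — 7 statements merged into one kernel-verified Lean document; each statement's English description precedes it below -/
import Mathlib

section
/- Let f : A ⥤ B and g : B ⥤ C be functors between categories. If g and the composite f ⋙ g are discrete opfibrations, then f is a discrete opfibration. -/
open CategoryTheory

/-- A functor `f : A ⥤ B` is a discrete opfibration if for every object `a : A` and
every morphism `u : f.obj a ⟶ b` in `B` there is a unique pair consisting of an object
`a'` with `f.obj a' = b` and a morphism `w : a ⟶ a'` whose image under `f` is `u`
(modulo the identification `f.obj a' = b`). -/
def IsDiscreteOpfibration {A B : Type*} [Category A] [Category B] (f : A ⥤ B) : Prop :=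
  ∀ (a : A) (b : B) (u : f.obj a ⟶ b),
    ∃! w : Σ a' : A, (a ⟶ a'), ∃ h : f.obj w.1 = b, f.map w.2 ≫ eqToHom h = u

/-- If `g` and `f ⋙ g` are discrete opfibrations, then so is `f`. -/
theorem isDiscreteOpfibration_of_comp {A B C : Type*} [Category A] [Category B] [Category C]
    (f : A ⥤ B) (g : B ⥤ C)
    (hg : IsDiscreteOpfibration g) (hfg : IsDiscreteOpfibration (f ⋙ g)) :
    IsDiscreteOpfibration f := by
  intro a b u
  obtain ⟨⟨a', w⟩, ⟨hw, hw2⟩, huniq⟩ := hfg a (g.obj b) (g.map u)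
  obtain ⟨p, hp, hpuniq⟩ := hg (f.obj a) (g.obj b) (g.map u)
  have h1 : (⟨f.obj a', f.map w⟩ : Σ b', f.obj a ⟶ b') = p := hpuniq _ ⟨hw, hw2⟩
  have h2 : (⟨b, u⟩ : Σ b', f.obj a ⟶ b') = p := hpuniq _ ⟨rfl, by simp⟩
  have key : (⟨f.obj a', f.map w⟩ : Σ b', f.obj a ⟶ b') = ⟨b, u⟩ := h1.trans h2.symm
  obtain ⟨hb, hu⟩ := Sigma.mk.inj_iff.mp key
  refine ⟨⟨a', w⟩, ⟨hb, ?_⟩, ?_⟩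
  · subst hb
    simpa using eq_of_heq hu
  · rintro ⟨a'', w'⟩ ⟨h', hmap⟩
    apply huniq
    refine ⟨congrArg g.obj h', ?_⟩
    have : g.map (f.map w' ≫ eqToHom h') = g.map u := congrArg g.map hmap
    simpa [eqToHom_map] using this
end

section
/- Let (f, φ) : A ⇄ B be a delta lens. Define Λ with objects the objects of A and with morphisms from a to a' given by pairs (b, u) where u : f.obj a ⟶ b is a morphism of B with p(a,u) = a', with identity (f.obj a, 𝟙) and composition (b,u) followed by (b',v) given by (b', v ∘ u). Then: (i) Λ is a category; (ii) the identity-on-objects assignment i : Λ ⥤ A sending (b,u) to φ(a,u) is a faithful functor; (iii) the assignment q : Λ ⥤ B sending the object a to f.obj a and the morphism (b,u) to u is a discrete opfibration; and (iv) the composite i ⋙ f equals q. -/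
open CategoryTheory

/-- A delta lens `(f, φ) : A ⇄ B`. -/
structure DeltaLens (A B : Type*) [Category A] [Category B] where
  f : A ⥤ B
  p : ∀ (a : A) (b : B), (f.obj a ⟶ b) → A
  lift : ∀ (a : A) (b : B) (u : f.obj a ⟶ b), a ⟶ p a b u
  f_p : ∀ (a : A) (b : B) (u : f.obj a ⟶ b), f.obj (p a b u) = b
  f_lift : ∀ (a : A) (b : B) (u : f.obj a ⟶ b), f.map (lift a b u) ≫ eqToHom (f_p a b u) = u
  p_id : ∀ a : A, p a (f.obj a) (𝟙 (f.obj a)) = a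
  lift_id : ∀ a : A, lift a (f.obj a) (𝟙 (f.obj a)) ≫ eqToHom (p_id a) = 𝟙 a
  p_comp : ∀ (a : A) (b b' : B) (u : f.obj a ⟶ b) (v : b ⟶ b'),
    p a b' (u ≫ v) = p (p a b u) b' (eqToHom (f_p a b u) ≫ v)
  lift_comp : ∀ (a : A) (b b' : B) (u : f.obj a ⟶ b) (v : b ⟶ b'),
    lift a b' (u ≫ v) ≫ eqToHom (p_comp a b b' u v) =
      lift a b u ≫ lift (p a b u) b' (eqToHom (f_p a b u) ≫ v)

variable {A B : Type*} [Category A] [Category B]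

/-- The objects of the category `Λ` of chosen lifts of a delta lens:
these are just the objects of `A`. -/
structure LambdaObj (L : DeltaLens A B) where
  a : A

/-- Morphisms `x ⟶ y` in `Λ` are pairs `(b, u)` with `u : L.f.obj x.a ⟶ b` such that
`L.p x.a b u = y.a`. -/
instance lambdaQuiver (L : DeltaLens A B) : Quiver (LambdaObj L) where
  Hom x y := { w : Σ b : B, (L.f.obj x.a ⟶ b) // L.p x.a w.1 w.2 = y.a }

theorem lambdaHom_obj (L : DeltaLens A B) {x y : LambdaObj L} (w : x ⟶ y) :
    L.f.obj y.a = w.1.1 := by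
  have h := L.f_p x.a w.1.1 w.1.2
  rw [w.2] at h
  exact h

theorem lambda_comp_aux (L : DeltaLens A B) (xa ya za : A) (b : B) (u : L.f.obj xa ⟶ b)
    (hw : L.p xa b u = ya) (b' : B) (u' : L.f.obj ya ⟶ b') (hv : L.p ya b' u' = za)
    (h : b = L.f.obj ya) :
    L.p xa b' (u ≫ eqToHom h ≫ u') = za := by
  subst hw
  subst hv
  rw [L.p_comp]
  congr 1
  simp [eqToHom_trans_assoc]

/-- The category structure on `Λ`: identities are `(f.obj a, 𝟙)` and composition of
`(b, u)` and `(b', v)` is `(b', v ∘ u)` (modulo the induced identification). -/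
instance lambdaCategoryStruct (L : DeltaLens A B) : CategoryStruct (LambdaObj L) where
  id x := ⟨⟨L.f.obj x.a, 𝟙 (L.f.obj x.a)⟩, L.p_id x.a⟩
  comp {x y z} w v :=
    ⟨⟨v.1.1, w.1.2 ≫ eqToHom (lambdaHom_obj L w).symm ≫ v.1.2⟩,
      lambda_comp_aux L x.a y.a z.a w.1.1 w.1.2 w.2 v.1.1 v.1.2 v.2
        (lambdaHom_obj L w).symm⟩

/-- The identity-on-objects assignment `i : Λ ⥤ A` on morphisms, sending `(b, u)` to
the chosen lift `φ(a, u)`. -/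
def lambdaToA (L : DeltaLens A B) {x y : LambdaObj L} (w : x ⟶ y) : x.a ⟶ y.a :=
  L.lift x.a w.1.1 w.1.2 ≫ eqToHom w.2

/-- The assignment `q : Λ ⥤ B` on morphisms, sending `(b, u)` to `u`;
on objects it sends `a` to `f.obj a`. -/
def lambdaToB (L : DeltaLens A B) {x y : LambdaObj L} (w : x ⟶ y) :
    L.f.obj x.a ⟶ L.f.obj y.a :=
  w.1.2 ≫ eqToHom (lambdaHom_obj L w).symm

theorem lambda_hom_ext (L : DeltaLens A B) {x y : LambdaObj L} (w v : x ⟶ y)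
    (h : lambdaToB L w = lambdaToB L v) : w = v := by
  obtain ⟨⟨b, u⟩, hw⟩ := w
  obtain ⟨⟨b', u'⟩, hv⟩ := v
  have hb : L.f.obj y.a = b := lambdaHom_obj L ⟨⟨b, u⟩, hw⟩
  have hb' : L.f.obj y.a = b' := lambdaHom_obj L ⟨⟨b', u'⟩, hv⟩
  subst hb; subst hb'
  simp only [lambdaToB, eqToHom_refl, Category.comp_id] at h
  subst h
  rfl

theorem lambdaToB_id (L : DeltaLens A B) (x : LambdaObj L) :
    lambdaToB L (𝟙 x) = 𝟙 (L.f.obj x.a) := by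
  simp [lambdaToB, CategoryStruct.id]

theorem lambdaToB_comp (L : DeltaLens A B) {x y z : LambdaObj L} (w : x ⟶ y) (v : y ⟶ z) :
    lambdaToB L (w ≫ v) = lambdaToB L w ≫ lambdaToB L v := by
  simp [lambdaToB, CategoryStruct.comp]

theorem lambdaToA_map (L : DeltaLens A B) {x y : LambdaObj L} (w : x ⟶ y) :
    L.f.map (lambdaToA L w) = lambdaToB L w := by
  obtain ⟨⟨b, u⟩, hw⟩ := w
  have hb : L.f.obj y.a = b := lambdaHom_obj L ⟨⟨b, u⟩, hw⟩
  simp only [lambdaToA, lambdaToB, Functor.map_comp, eqToHom_map]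
  rw [← cancel_mono (eqToHom hb)]
  simp only [Category.assoc, eqToHom_trans, eqToHom_refl, Category.comp_id]
  exact L.f_lift x.a b u

theorem lambdaToA_id (L : DeltaLens A B) (x : LambdaObj L) :
    lambdaToA L (𝟙 x) = 𝟙 x.a := L.lift_id x.a

theorem DeltaLens.lift_eq (L : DeltaLens A B) {a : A} {b : B} {u u' : L.f.obj a ⟶ b}
    (h : u = u') : L.lift a b u = L.lift a b u' ≫ eqToHom (by rw [h]) := by
  subst h; simp

theorem DeltaLens.lift_comp' (L : DeltaLens A B) (a : A) (b b' : B) (u : L.f.obj a ⟶ b)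
    (u' : L.f.obj (L.p a b u) ⟶ b') (h₁ : b = L.f.obj (L.p a b u))
    (h₃ : L.p a b' (u ≫ eqToHom h₁ ≫ u') = L.p (L.p a b u) b' u') :
    L.lift a b' (u ≫ eqToHom h₁ ≫ u') ≫ eqToHom h₃ =
      L.lift a b u ≫ L.lift (L.p a b u) b' u' := by
  have e : eqToHom (L.f_p a b u) ≫ eqToHom h₁ ≫ u' = u' := by simp
  have hp : L.p (L.p a b u) b' u' =
      L.p (L.p a b u) b' (eqToHom (L.f_p a b u) ≫ eqToHom h₁ ≫ u') := by rw [e]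
  rw [← cancel_mono (eqToHom hp), Category.assoc, Category.assoc, eqToHom_trans,
    ← L.lift_eq e, ← L.lift_comp]

theorem lambdaToA_comp_aux (L : DeltaLens A B) (a ya za : A) (b b' : B)
    (u : L.f.obj a ⟶ b) (u' : L.f.obj ya ⟶ b') (hw : L.p a b u = ya)
    (hv : L.p ya b' u' = za) (h₁ : b = L.f.obj ya)
    (h₃ : L.p a b' (u ≫ eqToHom h₁ ≫ u') = za) :
    L.lift a b' (u ≫ eqToHom h₁ ≫ u') ≫ eqToHom h₃ =
      (L.lift a b u ≫ eqToHom hw) ≫ (L.lift ya b' u' ≫ eqToHom hv) := by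
  subst hw; subst hv
  simp only [eqToHom_refl, Category.comp_id]
  exact L.lift_comp' a b b' u u' h₁ h₃

theorem lambdaToA_comp (L : DeltaLens A B) {x y z : LambdaObj L} (w : x ⟶ y) (v : y ⟶ z) :
    lambdaToA L (w ≫ v) = lambdaToA L w ≫ lambdaToA L v := by
  obtain ⟨⟨b, u⟩, hw⟩ := w
  obtain ⟨⟨b', u'⟩, hv⟩ := v
  exact lambdaToA_comp_aux L x.a y.a z.a b b' u u' hw hv _ _

/-- For a delta lens `(f, φ) : A ⇄ B`: (i) `Λ` is a category; (ii) the
identity-on-objects assignment `i : Λ ⥤ A` sending `(b, u)` to `φ(a, u)` is a faithful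
functor; (iii) `q : Λ ⥤ B`, sending `a` to `f.obj a` and `(b, u)` to `u`, is a discrete
opfibration; (iv) `i ⋙ f = q`. -/
theorem deltaLens_lambda (L : DeltaLens A B) :
    -- (i) the category axioms hold for the structure above
    (∀ (x y : LambdaObj L) (w : x ⟶ y), 𝟙 x ≫ w = w) ∧
    (∀ (x y : LambdaObj L) (w : x ⟶ y), w ≫ 𝟙 y = w) ∧
    (∀ (x y z t : LambdaObj L) (w : x ⟶ y) (v : y ⟶ z) (s : z ⟶ t),
      (w ≫ v) ≫ s = w ≫ (v ≫ s)) ∧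
    -- (ii) `i` is a faithful functor to `A`
    (∀ x : LambdaObj L, lambdaToA L (𝟙 x) = 𝟙 x.a) ∧
    (∀ (x y z : LambdaObj L) (w : x ⟶ y) (v : y ⟶ z),
      lambdaToA L (w ≫ v) = lambdaToA L w ≫ lambdaToA L v) ∧
    (∀ (x y : LambdaObj L) (w v : x ⟶ y), lambdaToA L w = lambdaToA L v → w = v) ∧
    -- (iii) `q` is a functor to `B` which is a discrete opfibration
    (∀ x : LambdaObj L, lambdaToB L (𝟙 x) = 𝟙 (L.f.obj x.a)) ∧
    (∀ (x y z : LambdaObj L) (w : x ⟶ y) (v : y ⟶ z),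
      lambdaToB L (w ≫ v) = lambdaToB L w ≫ lambdaToB L v) ∧
    (∀ (x : LambdaObj L) (b : B) (u : L.f.obj x.a ⟶ b),
      ∃! t : Σ y : LambdaObj L, (x ⟶ y),
        ∃ h : L.f.obj t.1.a = b, lambdaToB L t.2 ≫ eqToHom h = u) ∧
    -- (iv) the composite `i ⋙ f` equals `q`
    (∀ (x y : LambdaObj L) (w : x ⟶ y), L.f.map (lambdaToA L w) = lambdaToB L w) := by

  refine ⟨?_, ?_, ?_, lambdaToA_id L, fun x y z w v => lambdaToA_comp L w v, ?_,
    lambdaToB_id L, fun x y z w v => lambdaToB_comp L w v, ?_, fun x y w => lambdaToA_map L w⟩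
  · intro x y w
    apply lambda_hom_ext
    rw [lambdaToB_comp, lambdaToB_id, Category.id_comp]
  · intro x y w
    apply lambda_hom_ext
    rw [lambdaToB_comp, lambdaToB_id, Category.comp_id]
  · intro x y z t w v s
    apply lambda_hom_ext
    simp only [lambdaToB_comp, Category.assoc]
  · intro x y w v h
    apply lambda_hom_ext
    rw [← lambdaToA_map, ← lambdaToA_map, h]
  · intro x b u
    refine ⟨⟨⟨L.p x.a b u⟩, ⟨⟨b, u⟩, rfl⟩⟩, ⟨L.f_p x.a b u, ?_⟩, ?_⟩
    · simp [lambdaToB, eqToHom_trans]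
    · rintro ⟨⟨ya⟩, ⟨⟨b', u'⟩, hp⟩⟩ ⟨h, hu⟩
      dsimp at hp h hu ⊢
      subst hp
      have hb : b' = b := (L.f_p x.a b' u').symm.trans h
      subst hb
      simp only [lambdaToB, Category.assoc, eqToHom_trans, eqToHom_refl, Category.comp_id] at hu
      subst hu
      rfl
end

section
/- Let (f, φ) : A ⇄ B be a split opfibration. Let DA be the category Σ (a : A), Over a (the disjoint union of the slice categories of A, whose objects are morphisms w : a' ⟶ a of A, and whose morphisms from w₁ : a' ⟶ a to w₂ : a'' ⟶ a are morphisms u : a' ⟶ a'' with w₂ ∘ u = w₁), let DB be defined analogously from B, and let Df : DA ⥤ DB be the functor sending the slice component over a to the slice component over f.obj a by applying f (componentwise Over.post f). Then Df carries a delta lens structure: for an object w : a' ⟶ a of DA and a morphism of DB out of Df(w), given by v : f.obj a' ⟶ b together with target object m : b ⟶ f.obj a satisfying m ∘ v = f.map w, the chosen lift is the triangle formed by φ(a', v) : a' ⟶ p(a',v) and the unique morphism w₂ : p(a',v) ⟶ a with w₂ ∘ φ(a',v) = w and f.map w₂ = m modulo the identification f.obj p(a',v) = b; this lifting satisfies the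 delta lens axioms for Df. -/
open CategoryTheory

/-- A delta lens is a split opfibration when every chosen lift is `f`-opcartesian:
for every `u : f.obj a ⟶ b`, `w : a ⟶ a'` and `v : b ⟶ f.obj a'` with `u ≫ v = f.map w`
there is a unique `ψ : p a b u ⟶ a'` over `v` with `lift a b u ≫ ψ = w`. -/
def DeltaLens.IsSplitOpfibration {A B : Type*} [Category A] [Category B]
    (L : DeltaLens A B) : Prop :=
  ∀ (a : A) (b : B) (u : L.f.obj a ⟶ b) (a' : A) (w : a ⟶ a') (v : b ⟶ L.f.obj a'),
    u ≫ v = L.f.map w →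
      ∃! ψ : L.p a b u ⟶ a',
        L.f.map ψ = eqToHom (L.f_p a b u) ≫ v ∧ L.lift a b u ≫ ψ = w

variable {A B : Type*} [Category A] [Category B]

/-- The right décalage `DA` of a category `A`: the disjoint union of the slice
categories of `A`. Objects are morphisms `hom : src ⟶ base` of `A`. -/
structure Dec (A : Type*) [Category A] where
  base : A
  src : A
  hom : src ⟶ base

/-- Morphisms of `DA` from `w₁ : a' ⟶ a` to `w₂ : a'' ⟶ a` are morphisms
`u : a' ⟶ a''` with `w₂ ∘ u = w₁` (there are no morphisms between different slice
components). -/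
instance decQuiver : Quiver (Dec A) where
  Hom x y := { u : x.src ⟶ y.src // ∃ h : x.base = y.base, u ≫ y.hom ≫ eqToHom h.symm = x.hom }

instance decCategoryStruct : CategoryStruct (Dec A) where
  id x := ⟨𝟙 x.src, ⟨rfl, by simp⟩⟩
  comp {x y z} u v := ⟨u.1 ≫ v.1, by
    obtain ⟨h₁, e₁⟩ := u.2
    obtain ⟨h₂, e₂⟩ := v.2
    refine ⟨h₁.trans h₂, ?_⟩
    calc (u.1 ≫ v.1) ≫ z.hom ≫ eqToHom (h₁.trans h₂).symm
        = u.1 ≫ (v.1 ≫ z.hom ≫ eqToHom h₂.symm) ≫ eqToHom h₁.symm := by simp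
      _ = u.1 ≫ y.hom ≫ eqToHom h₁.symm := by rw [e₂]
      _ = x.hom := e₁⟩

instance decCategory : Category (Dec A) where
  id_comp u := Subtype.ext (Category.id_comp u.1)
  comp_id u := Subtype.ext (Category.comp_id u.1)
  assoc u v w := Subtype.ext (Category.assoc u.1 v.1 w.1)

/-- The right décalage of a functor, `Df : DA ⥤ DB`, acting componentwise on the slice
categories (by postcomposition with `f` on each slice). -/
def DecMap (f : A ⥤ B) : Dec A ⥤ Dec B where
  obj x := ⟨f.obj x.base, f.obj x.src, f.map x.hom⟩
  map {x y} u := ⟨f.map u.1, by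
    obtain ⟨h, e⟩ := u.2
    refine ⟨congrArg f.obj h, ?_⟩
    have e' := congrArg f.map e
    simpa [eqToHom_map] using e'⟩
  map_id x := Subtype.ext (f.map_id x.src)
  map_comp u v := Subtype.ext (f.map_comp u.1 v.1)

/-- The unique fill-in morphism `w₂ : p(a', v) ⟶ a` with `w₂ ∘ φ(a', v) = w`, lying
over `m`, obtained from the split opfibration property. -/
noncomputable def decChosen (L : DeltaLens A B) (hL : L.IsSplitOpfibration)
    (x : Dec A) (y : Dec B) (u : (DecMap L.f).obj x ⟶ y) :
    L.p x.src y.src u.1 ⟶ x.base :=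
  Classical.choose
    (hL x.src y.src u.1 x.base x.hom (y.hom ≫ eqToHom u.2.choose.symm) u.2.choose_spec)

theorem decChosen_comp (L : DeltaLens A B) (hL : L.IsSplitOpfibration)
    (x : Dec A) (y : Dec B) (u : (DecMap L.f).obj x ⟶ y) :
    L.lift x.src y.src u.1 ≫ decChosen L hL x y u = x.hom :=
  (Classical.choose_spec
    (hL x.src y.src u.1 x.base x.hom (y.hom ≫ eqToHom u.2.choose.symm)
      u.2.choose_spec)).1.2

/-- The chosen codomain for the delta lens structure on `Df` obtained from a split
opfibration `(f, φ)`: given an object `w : a' ⟶ a` of `DA` and a morphism of `DB` out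
of `Df w`, given by `v : f.obj a' ⟶ b` together with the target object `m : b ⟶ f.obj a`
satisfying `m ∘ v = f.map w`, the codomain is the object `w₂ : p(a', v) ⟶ a` of `DA`
given by the unique fill-in morphism. -/
noncomputable def decP (L : DeltaLens A B) (hL : L.IsSplitOpfibration)
    (x : Dec A) (y : Dec B) (u : (DecMap L.f).obj x ⟶ y) : Dec A :=
  ⟨x.base, L.p x.src y.src u.1, decChosen L hL x y u⟩

/-- The chosen lift for the delta lens structure on `Df`: the commutative triangle
formed by `φ(a', v) : a' ⟶ p(a', v)` over the given morphism of `DB`. -/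
noncomputable def decLift (L : DeltaLens A B) (hL : L.IsSplitOpfibration)
    (x : Dec A) (y : Dec B) (u : (DecMap L.f).obj x ⟶ y) : x ⟶ decP L hL x y u :=
  ⟨L.lift x.src y.src u.1, ⟨rfl, by
    show L.lift x.src y.src u.1 ≫ decChosen L hL x y u ≫ eqToHom (Eq.symm rfl) = x.hom
    simpa using decChosen_comp L hL x y u⟩⟩

/- The slice components of the décalage are preserved by every lift, so the delta lens structure on
`Df` is assembled fibrewise: the source of a lifted triangle is moved by the chosen lift of `(f, φ)`,
and its hypotenuse is the opcartesian fill-in. The lens axioms for `Df` then reduce to those of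
`(f, φ)` together with uniqueness of fill-ins: the hypotenuse lifted along an identity is the
original one, and the hypotenuse lifted along `v ∘ u` is the one lifted along `u` and then `v`. -/

namespace DeltaLens.IsSplitOpfibration

variable {L : DeltaLens A B} (hL : L.IsSplitOpfibration)

noncomputable def fill {a : A} {b : B} (u : L.f.obj a ⟶ b) {a' : A} (w : a ⟶ a')
    (v : b ⟶ L.f.obj a') (h : u ≫ v = L.f.map w) : L.p a b u ⟶ a' :=
  (hL a b u a' w v h).choose

section Fill

variable {a : A} {b : B} (u : L.f.obj a ⟶ b) {a' : A} (w : a ⟶ a') (v : b ⟶ L.f.obj a')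
  (h : u ≫ v = L.f.map w)

lemma map_fill : L.f.map (hL.fill u w v h) = eqToHom (L.f_p a b u) ≫ v :=
  (hL a b u a' w v h).choose_spec.1.1

lemma lift_fill : L.lift a b u ≫ hL.fill u w v h = w :=
  (hL a b u a' w v h).choose_spec.1.2

lemma eq_fill {ψ : L.p a b u ⟶ a'} (hψ : L.f.map ψ = eqToHom (L.f_p a b u) ≫ v)
    (hψw : L.lift a b u ≫ ψ = w) : ψ = hL.fill u w v h :=
  (hL a b u a' w v h).choose_spec.2 ψ ⟨hψ, hψw⟩

lemma map_fill_comp_eqToHom {b₀ : B} (m : b ⟶ b₀) (e : L.f.obj a' = b₀)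
    (hm : u ≫ m ≫ eqToHom e.symm = L.f.map w) :
    L.f.map (hL.fill u w (m ≫ eqToHom e.symm) hm) ≫ eqToHom e = eqToHom (L.f_p a b u) ≫ m := by
  simp [map_fill]

end Fill

lemma fill_id {a a' : A} (w : a ⟶ a') (v : L.f.obj a ⟶ L.f.obj a')
    (h : 𝟙 (L.f.obj a) ≫ v = L.f.map w) :
    hL.fill (𝟙 (L.f.obj a)) w v h = eqToHom (L.p_id a) ≫ w := by
  refine (hL.eq_fill _ w v h ?_ ?_).symm
  · rw [Category.id_comp] at h
    simp [eqToHom_map, h]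
  · rw [← Category.assoc, L.lift_id, Category.id_comp]

lemma fill_comp {a a' : A} {b b' : B} (u : L.f.obj a ⟶ b) (v : b ⟶ b') (w : a ⟶ a')
    (m₁ : b ⟶ L.f.obj a') (h₁ : u ≫ m₁ = L.f.map w) (m : b' ⟶ L.f.obj a')
    (h : (u ≫ v) ≫ m = L.f.map w)
    (h₂ : (eqToHom (L.f_p a b u) ≫ v) ≫ m = L.f.map (hL.fill u w m₁ h₁)) :
    hL.fill (u ≫ v) w m h =
      eqToHom (L.p_comp a b b' u v) ≫ hL.fill (eqToHom (L.f_p a b u) ≫ v) _ m h₂ := by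
  refine (hL.eq_fill _ w m h ?_ ?_).symm
  · simp [eqToHom_map, map_fill]
  · rw [← Category.assoc, L.lift_comp, Category.assoc, lift_fill, lift_fill]

end DeltaLens.IsSplitOpfibration

namespace Dec

lemma ext' {x y : Dec A} (hb : x.base = y.base) (hs : x.src = y.src)
    (hh : x.hom ≫ eqToHom hb = eqToHom hs ≫ y.hom) : x = y := by
  cases x; cases y
  dsimp at hb hs
  subst hb hs
  simpa using hh

@[simp]
lemma comp_val {x y z : Dec A} (u : x ⟶ y) (v : y ⟶ z) : (u ≫ v).1 = u.1 ≫ v.1 := rfl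

@[simp]
lemma eqToHom_val {x y : Dec A} (h : x = y) : (eqToHom h).1 = eqToHom (congrArg Dec.src h) := by
  subst h
  rfl

end Dec

section DecLens

variable (L : DeltaLens A B) (hL : L.IsSplitOpfibration)

lemma decMap_obj_decP (x : Dec A) (y : Dec B) (u : (DecMap L.f).obj x ⟶ y) :
    (DecMap L.f).obj (decP L hL x y u) = y :=
  Dec.ext' u.2.choose (L.f_p x.src y.src u.1)
    (hL.map_fill_comp_eqToHom u.1 x.hom y.hom _ u.2.choose_spec)

lemma decMap_map_decLift (x : Dec A) (y : Dec B) (u : (DecMap L.f).obj x ⟶ y) :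
    (DecMap L.f).map (decLift L hL x y u) ≫ eqToHom (decMap_obj_decP L hL x y u) = u :=
  Subtype.ext <| by
    rw [Dec.comp_val, Dec.eqToHom_val]
    exact L.f_lift x.src y.src u.1

lemma decP_id (x : Dec A) : decP L hL x ((DecMap L.f).obj x) (𝟙 _) = x :=
  Dec.ext' rfl (L.p_id x.src) <| (Category.comp_id _).trans <|
    hL.fill_id x.hom _ (Subtype.property (𝟙 ((DecMap L.f).obj x))).choose_spec

lemma decLift_id (x : Dec A) : decLift L hL x _ (𝟙 _) ≫ eqToHom (decP_id L hL x) = 𝟙 x :=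
  Subtype.ext <| by
    rw [Dec.comp_val, Dec.eqToHom_val]
    exact L.lift_id x.src

lemma eqToHom_comp_val (x : Dec A) (b b' : Dec B) (u : (DecMap L.f).obj x ⟶ b) (v : b ⟶ b') :
    (eqToHom (decMap_obj_decP L hL x b u) ≫ v).1 = eqToHom (L.f_p x.src b.src u.1) ≫ v.1 := by
  rw [Dec.comp_val, Dec.eqToHom_val]
  rfl

-- `(eqToHom _ ≫ v).1` is `eqToHom _ ≫ v.1` only propositionally, hence the explicit `w`.
lemma decP_comp (x : Dec A) (b b' : Dec B) (u : (DecMap L.f).obj x ⟶ b) (v : b ⟶ b')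
    (w : (DecMap L.f).obj (decP L hL x b u) ⟶ b')
    (hw : w.1 = eqToHom (L.f_p x.src b.src u.1) ≫ v.1) :
    decP L hL x b' (u ≫ v) = decP L hL (decP L hL x b u) b' w := by
  obtain ⟨w, hw'⟩ := w
  subst hw
  refine Dec.ext' rfl (L.p_comp x.src b.src b'.src u.1 v.1) ?_
  exact (Category.comp_id _).trans <|
    hL.fill_comp u.1 v.1 x.hom _ u.2.choose_spec _ (u ≫ v).2.choose_spec hw'.choose_spec

lemma decLift_comp (x : Dec A) (b b' : Dec B) (u : (DecMap L.f).obj x ⟶ b) (v : b ⟶ b')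
    (w : (DecMap L.f).obj (decP L hL x b u) ⟶ b')
    (hw : w.1 = eqToHom (L.f_p x.src b.src u.1) ≫ v.1)
    (h : decP L hL x b' (u ≫ v) = decP L hL (decP L hL x b u) b' w) :
    decLift L hL x b' (u ≫ v) ≫ eqToHom h = decLift L hL x b u ≫ decLift L hL _ b' w := by
  obtain ⟨w, hw'⟩ := w
  subst hw
  refine Subtype.ext ?_
  rw [Dec.comp_val, Dec.comp_val, Dec.eqToHom_val]
  exact L.lift_comp x.src b.src b'.src u.1 v.1

end DecLens

/-- If `(f, φ) : A ⇄ B` is a split opfibration then the right décalage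
`Df : DA ⥤ DB` carries a delta lens structure, whose chosen lifts are the triangles
formed by the chosen lifts of `(f, φ)` and the unique fill-in morphisms. -/
theorem decalage_deltaLens (L : DeltaLens A B) (hL : L.IsSplitOpfibration) :
    ∃ DL : DeltaLens (Dec A) (Dec B),
      DL.f = DecMap L.f ∧ HEq DL.p (decP L hL) ∧ HEq DL.lift (decLift L hL) :=
  ⟨{ f := DecMap L.f
     p := decP L hL
     lift := decLift L hL
     f_p := decMap_obj_decP L hL
     f_lift := decMap_map_decLift L hL
     p_id := decP_id L hL
     lift_id := decLift_id L hL
     p_comp := fun x b b' u v => decP_comp L hL x b b' u v _ (eqToHom_comp_val L hL x b b' u v)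
     lift_comp := fun x b b' u v =>
       decLift_comp L hL x b b' u v _ (eqToHom_comp_val L hL x b b' u v) _ },
   rfl, HEq.rfl, HEq.rfl⟩
end

section
/- Let (f, φ) : A ⇄ B be a delta lens. Then (f, φ) is a split opfibration if and only if every morphism of A factors strictly uniquely as a vertical morphism following a chosen lift; that is, for every morphism w : a ⟶ a' of A there exist an object b of B, a morphism u : f.obj a ⟶ b, and a vertical morphism x : p(a,u) ⟶ a' with x ∘ φ(a,u) = w, and moreover if (b, u, x) and (b', u', x') are two such factorizations of w then b = b', u = u' (modulo the identification b = b') and x = x'. -/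
open CategoryTheory

lemma DeltaLens.f_map_lift {A B : Type*} [Category A] [Category B] (L : DeltaLens A B)
    (a : A) (b : B) (u : L.f.obj a ⟶ b) :
    L.f.map (L.lift a b u) = u ≫ eqToHom (L.f_p a b u).symm := by
  exact (comp_eqToHom_iff (L.f_p a b u) _ _).mp (L.f_lift a b u)

/-- A delta lens `(f, φ) : A ⇄ B` is a split opfibration if and only if every morphism
of `A` factors strictly uniquely as a vertical morphism following a chosen lift. -/
theorem isSplitOpfibration_iff_strictFactorisation {A B : Type*} [Category A] [Category B]
    (L : DeltaLens A B) :
    L.IsSplitOpfibration ↔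
      ∀ (a a' : A) (w : a ⟶ a'),
        ∃! t : Σ (b : B) (u : L.f.obj a ⟶ b), (L.p a b u ⟶ a'),
          (∃ h : L.f.obj (L.p a t.1 t.2.1) = L.f.obj a', L.f.map t.2.2 = eqToHom h) ∧
          L.lift a t.1 t.2.1 ≫ t.2.2 = w := by
  constructor
  · intro H a a' w
    obtain ⟨ψ, ⟨hψf, hψl⟩, hψu⟩ :=
      H a (L.f.obj a') (L.f.map w) a' w (𝟙 _) (by simp)
    refine ⟨⟨L.f.obj a', L.f.map w, ψ⟩, ⟨⟨L.f_p _ _ _, by simpa using hψf⟩, hψl⟩, ?_⟩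
    rintro ⟨b', u', x'⟩ ⟨⟨h, hx⟩, hl⟩
    have hb : b' = L.f.obj a' := (L.f_p a b' u').symm.trans h
    subst hb
    have hu : u' = L.f.map w := by
      have : L.f.map w = L.f.map (L.lift a _ u') ≫ L.f.map x' := by
        rw [← Functor.map_comp, hl]
      rw [L.f_map_lift, hx, Category.assoc, eqToHom_trans, eqToHom_refl,
        Category.comp_id] at this
      exact this.symm
    subst hu
    have hx' : x' = ψ := hψu x' ⟨by rw [hx]; simp, hl⟩
    subst hx'
    rfl
  · intro H a b u a' w v hv
    -- unique factorisation of w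
    obtain ⟨⟨b₀, u₀, x₀⟩, ⟨⟨h₀, hx₀⟩, hl₀⟩, hu₀⟩ := H a a' w
    have hb₀ : b₀ = L.f.obj a' := (L.f_p a b₀ u₀).symm.trans h₀
    subst hb₀
    have hu₀' : u₀ = u ≫ v := by
      have : L.f.map w = L.f.map (L.lift a _ u₀) ≫ L.f.map x₀ := by
        rw [← Functor.map_comp, hl₀]
      rw [L.f_map_lift, hx₀, Category.assoc, eqToHom_trans, eqToHom_refl,
        Category.comp_id] at this
      rw [hv, this]
    subst hu₀'
    set e := L.p_comp a b (L.f.obj a') u v with he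
    refine ⟨L.lift (L.p a b u) (L.f.obj a') (eqToHom (L.f_p a b u) ≫ v) ≫
      eqToHom e.symm ≫ x₀, ⟨?_, ?_⟩, ?_⟩
    · rw [Functor.map_comp, Functor.map_comp, L.f_map_lift, eqToHom_map, hx₀]
      simp
    · rw [← Category.assoc, ← L.lift_comp]
      simp [hl₀]
    · intro ψ' ⟨hψ'f, hψ'l⟩
      obtain ⟨⟨b₁, u₁, x₁⟩, ⟨⟨h₁, hx₁⟩, hl₁⟩, _⟩ := H (L.p a b u) a' ψ'
      have hb₁ : b₁ = L.f.obj a' := (L.f_p _ b₁ u₁).symm.trans h₁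
      subst hb₁
      have hu₁ : u₁ = eqToHom (L.f_p a b u) ≫ v := by
        have : L.f.map ψ' = L.f.map (L.lift _ _ u₁) ≫ L.f.map x₁ := by
          rw [← Functor.map_comp, hl₁]
        rw [L.f_map_lift, hx₁, Category.assoc, eqToHom_trans, eqToHom_refl,
          Category.comp_id] at this
        rw [← this, hψ'f]
      subst hu₁
      have key : (⟨L.f.obj a', u ≫ v, eqToHom e ≫ x₁⟩ :
          Σ (b : B) (u : L.f.obj a ⟶ b), (L.p a b u ⟶ a')) = ⟨L.f.obj a', u ≫ v, x₀⟩ := by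
        refine hu₀ _ ⟨⟨?_, ?_⟩, ?_⟩
        · exact h₀
        · rw [Functor.map_comp, eqToHom_map, hx₁, eqToHom_trans]
        · rw [← Category.assoc]
          have := L.lift_comp a b (L.f.obj a') u v
          rw [← he] at this
          rw [this, Category.assoc, hl₁, hψ'l]
      have key' : eqToHom e ≫ x₁ = x₀ := by
        simpa using key
      rw [← hl₁, ← key', ← Category.assoc, ← Category.assoc]
      simp
end

section
/- Let (f, φ) : A ⇄ B be a delta lens. Then every morphism of A factors strictly uniquely as a vertical morphism following a chosen lift (as in the strict factorisation system (Λ, V)) if and only if there exists a function χ assigning to each morphism w : a ⟶ a' of A a morphism χ(w) : p(a, f.map w) ⟶ a' such that: (fibre) f.map χ(w) is an identity modulo the identification f.obj p(a, f.map w) = f.obj a'; (composition) χ(w) ∘ φ(a, f.map w) = w; and (uniqueness) for every morphism u : f.obj a ⟶ b of B and every vertical morphism x : p(a,u) ⟶ a', χ(x ∘ φ(a,u)) = x modulo the identification p(a, f.map(x ∘ φ(a,u))) = p(a,u). -/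
open CategoryTheory

private theorem third_heq {α : Type*} {β : α → Type*} {γ : ∀ a, β a → Type*}
    {a₁ a₂ : α} {b₁ : β a₁} {b₂ : β a₂} {c₁ : γ a₁ b₁} {c₂ : γ a₂ b₂}
    (h : (⟨a₁, b₁, c₁⟩ : Σ a, Σ b, γ a b) = ⟨a₂, b₂, c₂⟩) : HEq c₁ c₂ := by
  cases h; rfl

/-- For a delta lens `(f, φ) : A ⇄ B`, every morphism of `A` factors strictly uniquely
as a vertical morphism following a chosen lift (the strict factorisation system
`(Λ, V)`) if and only if there is a function `χ` assigning to every `w : a ⟶ a'` a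
morphism `χ(w) : p(a, f.map w) ⟶ a'` satisfying the fibre, composition and uniqueness
conditions. -/
theorem strictFactorisation_iff_chi {A B : Type*} [Category A] [Category B]
    (L : DeltaLens A B) :
    (∀ (a a' : A) (w : a ⟶ a'),
      ∃! t : Σ (b : B) (u : L.f.obj a ⟶ b), (L.p a b u ⟶ a'),
        (∃ h : L.f.obj (L.p a t.1 t.2.1) = L.f.obj a', L.f.map t.2.2 = eqToHom h) ∧
        L.lift a t.1 t.2.1 ≫ t.2.2 = w) ↔
      ∃ χ : ∀ (a a' : A) (w : a ⟶ a'), (L.p a (L.f.obj a') (L.f.map w) ⟶ a'),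
        -- fibre condition: `f.map χ(w)` is an identity modulo the identification
        (∀ (a a' : A) (w : a ⟶ a'),
          L.f.map (χ a a' w) = eqToHom (L.f_p a (L.f.obj a') (L.f.map w))) ∧
        -- composition condition: `χ(w) ∘ φ(a, f.map w) = w`
        (∀ (a a' : A) (w : a ⟶ a'),
          L.lift a (L.f.obj a') (L.f.map w) ≫ χ a a' w = w) ∧
        -- uniqueness condition: for vertical `x : p(a, u) ⟶ a'`,
        -- `χ(x ∘ φ(a, u)) = x` modulo the induced identification
        (∀ (a a' : A) (b : B) (u : L.f.obj a ⟶ b) (x : L.p a b u ⟶ a'),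
          (∃ h : L.f.obj (L.p a b u) = L.f.obj a', L.f.map x = eqToHom h) →
          HEq (χ a a' (L.lift a b u ≫ x)) x) := by
  constructor
  · intro H
    have key : ∀ (a a' : A) (w : a ⟶ a'),
        ∃ x : L.p a (L.f.obj a') (L.f.map w) ⟶ a',
          L.f.map x = eqToHom (L.f_p a (L.f.obj a') (L.f.map w)) ∧
          L.lift a (L.f.obj a') (L.f.map w) ≫ x = w := by
      intro a a' w
      obtain ⟨⟨b, u, x⟩, ⟨⟨h0, hfx⟩, hc⟩, -⟩ := H a a' w
      have e : b = L.f.obj a' := (L.f_p a b u).symm.trans h0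
      subst e
      have hu : L.f.map w = u := by
        rw [← hc, Functor.map_comp, hfx]
        exact L.f_lift a _ u
      subst hu
      exact ⟨x, hfx, hc⟩
    choose χ h1 h2 using key
    refine ⟨χ, h1, h2, ?_⟩
    intro a a' b u x hx
    have P1 : (∃ h : L.f.obj (L.p a (L.f.obj a') (L.f.map (L.lift a b u ≫ x))) = L.f.obj a',
          L.f.map (χ a a' (L.lift a b u ≫ x)) = eqToHom h) ∧
        L.lift a (L.f.obj a') (L.f.map (L.lift a b u ≫ x)) ≫ χ a a' (L.lift a b u ≫ x) =
          L.lift a b u ≫ x :=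
      ⟨⟨_, h1 a a' (L.lift a b u ≫ x)⟩, h2 a a' (L.lift a b u ≫ x)⟩
    have P2 : (∃ h : L.f.obj (L.p a b u) = L.f.obj a',
          L.f.map x = eqToHom h) ∧ L.lift a b u ≫ x = L.lift a b u ≫ x := ⟨hx, rfl⟩
    have := (H a a' (L.lift a b u ≫ x)).unique
      (y₁ := ⟨L.f.obj a', L.f.map (L.lift a b u ≫ x), χ a a' (L.lift a b u ≫ x)⟩)
      (y₂ := ⟨b, u, x⟩) P1 P2
    exact third_heq (γ := fun b u => (L.p a b u ⟶ a')) this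
  · rintro ⟨χ, hfib, hcomp, huniq⟩ a a' w
    refine ⟨⟨L.f.obj a', L.f.map w, χ a a' w⟩,
      ⟨⟨_, hfib a a' w⟩, hcomp a a' w⟩, ?_⟩
    rintro ⟨b, u, x⟩ ⟨⟨h0, hfx⟩, hc⟩
    have e : b = L.f.obj a' := (L.f_p a b u).symm.trans h0
    subst e
    have hu : L.f.map w = u := by
      rw [← hc, Functor.map_comp, hfx]
      exact L.f_lift a _ u
    subst hu
    have hh : HEq (χ a a' (L.lift a (L.f.obj a') (L.f.map w) ≫ x)) x :=
      huniq a a' (L.f.obj a') (L.f.map w) x ⟨h0, hfx⟩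
    rw [hc] at hh
    rw [← eq_of_heq hh]
end

section
/- Let (f, φ) : A ⇄ B be a split opfibration, and for each morphism w : a ⟶ a' of A let χ(w) : p(a, f.map w) ⟶ a' denote the unique morphism such that f.map χ(w) is an identity (modulo the identification f.obj p(a, f.map w) = f.obj a') and χ(w) ∘ φ(a, f.map w) = w. Then: (i) for every object a and morphism u : f.obj a ⟶ b of B, χ(φ(a,u)) is the identity of p(a,u), modulo the identification p(a, f.map φ(a,u)) = p(a,u); (ii) χ is idempotent: χ(χ(w)) = χ(w) modulo the induced identifications; (iii) for composable morphisms w₁ : a ⟶ a' and w₂ : a' ⟶ a'' of A, χ(w₂ ∘ w₁) = χ(w₂) ∘ χ(φ(a', f.map w₂) ∘ χ(w₁)), modulo the identification p(a, f.map(w₂ ∘ w₁)) = p(p(a, f.map w₁), f.map w₂) coming from the delta lens axioms. -/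
open CategoryTheory

section Aux

variable {A B : Type*} [Category A] [Category B] (L : DeltaLens A B)

lemma DeltaLens.p_congr {a : A} {b b' : B} (hb : b = b') {u : L.f.obj a ⟶ b}
    {u' : L.f.obj a ⟶ b'} (hu : HEq u u') : L.p a b u = L.p a b' u' := by
  subst hb; cases hu; rfl

lemma DeltaLens.lift_congr {a : A} {b b' : B} (hb : b = b') {u : L.f.obj a ⟶ b}
    {u' : L.f.obj a ⟶ b'} (hu : HEq u u') : HEq (L.lift a b u) (L.lift a b' u') := by
  subst hb; cases hu; rfl

lemma DeltaLens.p_eqToHom (x : A) (b : B) (e : L.f.obj x = b) : L.p x b (eqToHom e) = x := by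
  subst e; rw [eqToHom_refl]; exact L.p_id x

lemma DeltaLens.lift_eqToHom_heq (x : A) (b : B) (e : L.f.obj x = b) :
    HEq (L.lift x b (eqToHom e)) (𝟙 x) := by
  subst e
  rw [eqToHom_refl]
  refine HEq.trans ?_ (heq_of_eq (L.lift_id x))
  exact (comp_eqToHom_heq _ _).symm

lemma comp_eqToHom_eq {a b b' : A} {g : a ⟶ b} {g' : a ⟶ b'} (hb : b = b')
    (H : HEq g g') : g ≫ eqToHom hb = g' := by
  subst hb; rw [eqToHom_refl, Category.comp_id]; exact eq_of_heq H

lemma heq_eqToHom_id {x y : A} (h : x = y) : HEq (eqToHom h) (𝟙 y) := by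
  subst h; rw [eqToHom_refl]

end Aux

/-- For a split opfibration `(f, φ) : A ⇄ B`, letting `χ(w) : p(a, f.map w) ⟶ a'`
denote the unique morphism with `f.map χ(w)` an identity (modulo the identification
`f.obj p(a, f.map w) = f.obj a'`) and `χ(w) ∘ φ(a, f.map w) = w`:
(i) `χ(φ(a, u))` is the identity of `p(a, u)`;
(ii) `χ` is idempotent;
(iii) `χ(w₂ ∘ w₁) = χ(w₂) ∘ χ(φ(a', f.map w₂) ∘ χ(w₁))`
(all modulo the induced identifications). -/
theorem splitOpfibration_chi {A B : Type*} [Category A] [Category B]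
    (L : DeltaLens A B) (hL : L.IsSplitOpfibration)
    (χ : ∀ (a a' : A) (w : a ⟶ a'), (L.p a (L.f.obj a') (L.f.map w) ⟶ a'))
    (hχ₁ : ∀ (a a' : A) (w : a ⟶ a'),
      L.f.map (χ a a' w) = eqToHom (L.f_p a (L.f.obj a') (L.f.map w)))
    (hχ₂ : ∀ (a a' : A) (w : a ⟶ a'),
      L.lift a (L.f.obj a') (L.f.map w) ≫ χ a a' w = w) :
    -- (i)
    (∀ (a : A) (b : B) (u : L.f.obj a ⟶ b),
      HEq (χ a (L.p a b u) (L.lift a b u)) (𝟙 (L.p a b u))) ∧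
    -- (ii)
    (∀ (a a' : A) (w : a ⟶ a'),
      HEq (χ (L.p a (L.f.obj a') (L.f.map w)) a' (χ a a' w)) (χ a a' w)) ∧
    -- (iii)
    (∀ (a a' a'' : A) (w₁ : a ⟶ a') (w₂ : a' ⟶ a''),
      HEq (χ a a'' (w₁ ≫ w₂))
        (χ (L.p a (L.f.obj a') (L.f.map w₁)) (L.p a' (L.f.obj a'') (L.f.map w₂))
            (χ a a' w₁ ≫ L.lift a' (L.f.obj a'') (L.f.map w₂)) ≫
          χ a' a'' w₂)) := by
  -- χ is the unique morphism with its two defining properties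
  have key : ∀ (a a' : A) (w : a ⟶ a') (ψ : L.p a (L.f.obj a') (L.f.map w) ⟶ a'),
      L.f.map ψ = eqToHom (L.f_p a (L.f.obj a') (L.f.map w)) →
      L.lift a (L.f.obj a') (L.f.map w) ≫ ψ = w → ψ = χ a a' w := by
    intro a a' w ψ h1 h2
    obtain ⟨ψ₀, -, hu⟩ := hL a (L.f.obj a') (L.f.map w) a' w (𝟙 _) (by simp)
    rw [hu ψ ⟨by simp [h1], h2⟩, hu (χ a a' w) ⟨by simp [hχ₁], hχ₂ a a' w⟩]
  refine ⟨?_, ?_, ?_⟩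
  · -- (i)
    intro a b u
    have hb := L.f_p a b u
    have hu : HEq (L.f.map (L.lift a b u)) u :=
      (comp_eqToHom_heq (L.f.map (L.lift a b u)) hb).symm.trans
        (heq_of_eq (L.f_lift a b u))
    have hS : L.p a (L.f.obj (L.p a b u)) (L.f.map (L.lift a b u)) = L.p a b u :=
      L.p_congr hb hu
    have hχ : χ a (L.p a b u) (L.lift a b u) = eqToHom hS := by
      refine (key _ _ _ (eqToHom hS) ?_ ?_).symm
      · simp [eqToHom_map]
      · exact comp_eqToHom_eq hS (L.lift_congr hb hu)
    rw [hχ]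
    exact heq_eqToHom_id hS
  · -- (ii)
    intro a a' w
    set S := L.p a (L.f.obj a') (L.f.map w) with hSdef
    have hu : HEq (L.f.map (χ a a' w)) (eqToHom (L.f_p a (L.f.obj a') (L.f.map w))) :=
      heq_of_eq (hχ₁ a a' w)
    have hS : L.p S (L.f.obj a') (L.f.map (χ a a' w)) = S :=
      (L.p_congr rfl hu).trans (L.p_eqToHom S _ _)
    have hlift : L.lift S (L.f.obj a') (L.f.map (χ a a' w)) ≫ eqToHom hS = 𝟙 S :=
      comp_eqToHom_eq hS ((L.lift_congr rfl hu).trans (L.lift_eqToHom_heq S _ _))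
    have hχ : χ S a' (χ a a' w) = eqToHom hS ≫ χ a a' w := by
      refine (key _ _ _ _ ?_ ?_).symm
      · simp [hχ₁, eqToHom_map]
      · rw [← Category.assoc, hlift, Category.id_comp]
    rw [hχ]
    exact eqToHom_comp_heq _ _
  · -- (iii)
    intro a a' a'' w₁ w₂
    set P₁ := L.p a (L.f.obj a') (L.f.map w₁) with hP₁
    set P₂ := L.p a' (L.f.obj a'') (L.f.map w₂) with hP₂
    set X : P₁ ⟶ P₂ := χ a a' w₁ ≫ L.lift a' (L.f.obj a'') (L.f.map w₂) with hX
    have hb2 : L.f.obj a'' = L.f.obj P₂ := (L.f_p a' (L.f.obj a'') (L.f.map w₂)).symm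
    -- the map of X
    have hmaplift : L.f.map (L.lift a' (L.f.obj a'') (L.f.map w₂)) =
        L.f.map w₂ ≫ eqToHom hb2 :=
      (comp_eqToHom_iff _ _ _).mp (L.f_lift a' (L.f.obj a'') (L.f.map w₂))
    have hmapX : L.f.map X =
        (eqToHom (L.f_p a (L.f.obj a') (L.f.map w₁)) ≫ L.f.map w₂) ≫ eqToHom hb2 := by
      rw [hX, L.f.map_comp, hχ₁, hmaplift, Category.assoc]
    have huX : HEq (eqToHom (L.f_p a (L.f.obj a') (L.f.map w₁)) ≫ L.f.map w₂)
        (L.f.map X) := by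
      rw [hmapX]
      exact (comp_eqToHom_heq _ _).symm
    -- chain of object identifications
    have e₁ : L.p a (L.f.obj a'') (L.f.map (w₁ ≫ w₂)) =
        L.p a (L.f.obj a'') (L.f.map w₁ ≫ L.f.map w₂) :=
      L.p_congr rfl (heq_of_eq (by rw [L.f.map_comp]))
    have e₂ := L.p_comp a (L.f.obj a') (L.f.obj a'') (L.f.map w₁) (L.f.map w₂)
    have e₃ : L.p P₁ (L.f.obj a'')
          (eqToHom (L.f_p a (L.f.obj a') (L.f.map w₁)) ≫ L.f.map w₂) =
        L.p P₁ (L.f.obj P₂) (L.f.map X) :=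
      L.p_congr hb2 huX
    have hS := (e₁.trans e₂).trans e₃
    have l₁ : L.lift a (L.f.obj a'') (L.f.map (w₁ ≫ w₂)) ≫ eqToHom e₁ =
        L.lift a (L.f.obj a'') (L.f.map w₁ ≫ L.f.map w₂) :=
      comp_eqToHom_eq e₁ (L.lift_congr rfl (heq_of_eq (by rw [L.f.map_comp])))
    have l₂ := L.lift_comp a (L.f.obj a') (L.f.obj a'') (L.f.map w₁) (L.f.map w₂)
    have l₃ : L.lift P₁ (L.f.obj a'')
          (eqToHom (L.f_p a (L.f.obj a') (L.f.map w₁)) ≫ L.f.map w₂) ≫ eqToHom e₃ =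
        L.lift P₁ (L.f.obj P₂) (L.f.map X) :=
      comp_eqToHom_eq e₃ (L.lift_congr hb2 huX)
    have hχ : χ a a'' (w₁ ≫ w₂) = eqToHom hS ≫ χ P₁ P₂ X ≫ χ a' a'' w₂ := by
      refine (key _ _ _ _ ?_ ?_).symm
      · simp [hχ₁, eqToHom_map]
      · have : eqToHom hS = eqToHom e₁ ≫ eqToHom e₂ ≫ eqToHom e₃ := by
          simp [eqToHom_trans]
        rw [this]
        calc L.lift a (L.f.obj a'') (L.f.map (w₁ ≫ w₂)) ≫
              (eqToHom e₁ ≫ eqToHom e₂ ≫ eqToHom e₃) ≫ χ P₁ P₂ X ≫ χ a' a'' w₂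
            = ((L.lift a (L.f.obj a'') (L.f.map (w₁ ≫ w₂)) ≫ eqToHom e₁) ≫ eqToHom e₂) ≫
                (eqToHom e₃ ≫ χ P₁ P₂ X ≫ χ a' a'' w₂) := by
              simp only [Category.assoc]
          _ = (L.lift a (L.f.obj a') (L.f.map w₁) ≫
                L.lift P₁ (L.f.obj a'')
                  (eqToHom (L.f_p a (L.f.obj a') (L.f.map w₁)) ≫ L.f.map w₂)) ≫
                (eqToHom e₃ ≫ χ P₁ P₂ X ≫ χ a' a'' w₂) := by rw [l₁, l₂]
          _ = L.lift a (L.f.obj a') (L.f.map w₁) ≫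
                (L.lift P₁ (L.f.obj a'')
                  (eqToHom (L.f_p a (L.f.obj a') (L.f.map w₁)) ≫ L.f.map w₂) ≫ eqToHom e₃) ≫
                χ P₁ P₂ X ≫ χ a' a'' w₂ := by simp only [Category.assoc]
          _ = L.lift a (L.f.obj a') (L.f.map w₁) ≫
                L.lift P₁ (L.f.obj P₂) (L.f.map X) ≫ χ P₁ P₂ X ≫ χ a' a'' w₂ := by rw [l₃]
          _ = L.lift a (L.f.obj a') (L.f.map w₁) ≫ X ≫ χ a' a'' w₂ := by
              rw [← Category.assoc (L.lift P₁ (L.f.obj P₂) (L.f.map X)), hχ₂]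
          _ = w₁ ≫ w₂ := by
              rw [hX]
              rw [Category.assoc, hχ₂, ← Category.assoc, hχ₂]
    rw [hχ]
    exact eqToHom_comp_heq _ _
end

section
/- Let M and N be monoids and let f : M →* N be a monoid homomorphism, inducing a functor F : SingleObj M ⥤ SingleObj N between the corresponding one-object categories. Then delta lens structures on F are in bijective correspondence with monoid homomorphisms s : N →* M satisfying f ∘ s = id_N; explicitly, a lifting φ makes (F, φ) a delta lens if and only if the function n ↦ φ(⋆, n) is a monoid homomorphism N →* M that is a right inverse of f. -/
open CategoryTheory

/-!
Between one-object categories every object identification is trivial and composition `u ≫ v`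
is the product `v * u`. The lens axioms for `f.toFunctor` therefore say exactly that
`s n := φ(⋆, n)` satisfies `f (s n) = n`, `s 1 = 1` and `s (v * u) = s v * s u`; conversely,
the chosen lifts of a lens are all recorded by `s`, since there is only one object to lift to.
-/

open SingleObj

namespace DeltaLens

variable {M N : Type*} [Monoid M] [Monoid N]

def liftHom (L : DeltaLens (SingleObj M) (SingleObj N)) : N →* M where
  toFun n := L.lift (star M) (star N) n
  map_one' := by
    have h : (1 : M) * L.lift (star M) (star N) 1 = 1 := L.lift_id (star M)
    rwa [one_mul] at h
  map_mul' v u := by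
    have h : (1 : M) * L.lift (star M) (star N) (v * u) =
        L.lift (star M) (star N) (v * 1) * L.lift (star M) (star N) u :=
      L.lift_comp (star M) (star N) (star N) u v
    -- the codomain of `lift` depends on `u`, so `mul_one` cannot be rewritten under it
    have h_mul_one : (L.lift (star M) (star N) (v * 1) : M) = L.lift (star M) (star N) v :=
      congrArg (fun w : N => (L.lift (star M) (star N) w : M)) (mul_one v)
    rwa [one_mul, h_mul_one] at h

theorem comp_liftHom {f : M →* N} (L : DeltaLens (SingleObj M) (SingleObj N))
    (hL : L.f = f.toFunctor) : f.comp L.liftHom = MonoidHom.id N := by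
  ext n
  have h : (1 : N) * L.f.map (X := star M) (Y := star M) (L.lift (star M) (star N) n) = n :=
    L.f_lift (star M) (star N) n
  rw [hL, one_mul] at h
  exact h

theorem ext_singleObj {L₁ L₂ : DeltaLens (SingleObj M) (SingleObj N)} (hf : L₁.f = L₂.f)
    (hlift : L₁.liftHom = L₂.liftHom) : L₁ = L₂ := by
  obtain ⟨F₁, p₁, lift₁⟩ := L₁
  obtain ⟨F₂, p₂, lift₂⟩ := L₂
  obtain rfl : F₁ = F₂ := hf
  obtain rfl : p₁ = p₂ := funext fun _ => funext fun _ => funext fun _ => Subsingleton.elim _ _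
  obtain rfl : lift₁ = lift₂ :=
    funext fun _ => funext fun _ => funext fun u => DFunLike.congr_fun hlift u
  rfl

def ofSection (f : M →* N) (s : N →* M) (hs : f.comp s = MonoidHom.id N) :
    DeltaLens (SingleObj M) (SingleObj N) where
  f := f.toFunctor
  p _ _ _ := star M
  lift _ _ u := s u
  f_p _ _ _ := rfl
  f_lift _ _ u := show 1 * f (s u) = u by rw [one_mul]; exact DFunLike.congr_fun hs u
  p_id _ := rfl
  lift_id _ := show 1 * s 1 = 1 by simp
  p_comp _ _ _ _ _ := rfl
  lift_comp _ _ _ u v := show 1 * s (v * u) = s (v * 1) * s u by simp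

def singleObjEquivSections (f : M →* N) :
    {L : DeltaLens (SingleObj M) (SingleObj N) // L.f = f.toFunctor} ≃
      {s : N →* M // f.comp s = MonoidHom.id N} where
  toFun L := ⟨L.1.liftHom, L.1.comp_liftHom L.2⟩
  invFun s := ⟨ofSection f s.1 s.2, rfl⟩
  left_inv L := Subtype.ext <| ext_singleObj L.2.symm rfl
  right_inv _ := rfl

end DeltaLens

/-- For a monoid homomorphism `f : M →* N`, with induced functor
`f.toFunctor : SingleObj M ⥤ SingleObj N`: delta lens structures on `f.toFunctor` are
in bijective correspondence with monoid homomorphisms `s : N →* M` with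
`f ∘ s = id`.  Explicitly, a lifting `φ` makes `(f.toFunctor, φ)` a delta lens if and
only if the function `n ↦ φ(⋆, n)` is a monoid homomorphism `N →* M` that is a right
inverse of `f`. -/
theorem singleObj_deltaLens_iff {M N : Type*} [Monoid M] [Monoid N] (f : M →* N) :
    (∀ φ : N → M,
      (∃ L : DeltaLens (SingleObj M) (SingleObj N),
          L.f = f.toFunctor ∧
          ∀ u : N, L.lift (SingleObj.star M) (SingleObj.star N) u = φ u) ↔
      (∃ s : N →* M, (∀ n : N, s n = φ n) ∧ f.comp s = MonoidHom.id N)) ∧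
    Nonempty
      ({L : DeltaLens (SingleObj M) (SingleObj N) // L.f = f.toFunctor} ≃
        {s : N →* M // f.comp s = MonoidHom.id N}) := by
  refine ⟨fun φ => ⟨?_, ?_⟩, ⟨DeltaLens.singleObjEquivSections f⟩⟩
  · rintro ⟨L, hL, hφ⟩
    exact ⟨L.liftHom, hφ, L.comp_liftHom hL⟩
  · rintro ⟨s, hsφ, hs⟩
    exact ⟨DeltaLens.ofSection f s hs, rfl, hsφ⟩
end
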